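/- arXiv:2202.04258 — 4 statements merged into one kernel-verified Lean document; each statement's English description precedes it below -/
import Mathlib

section
/- Let ℓ be a generating function and let P0, P1 be probability measures on Ω. Then the infimum over all measurable detectors T : Ω → ℝ of Φ(T; P0, P1) equals ∫ ψ(r(ω)) d(P0 + P1)(ω), where r = dP0/d(P0 + P1) is the Radon–Nikodym derivative of P0 with respect to P0 + P1 and ψ(r) = inf_{t ∈ ℝ} [(1 − r)ℓ(t) + r ℓ(−t)]. -/
open MeasureTheory ENNReal

/-- An enumeration of the rationals inside `ℝ`. -/
noncomputable def ratSeq : ℕ → ℝ := fun n => (((Denumerable.eqv ℚ).symm n : ℚ) : ℝ)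

lemma ratSeq_surj (c : ℚ) : ∃ n, ratSeq n = (c : ℝ) :=
  ⟨Denumerable.eqv ℚ c, by simp [ratSeq]⟩

/-- Infimum over reals of a continuous nonneg function equals infimum over the rationals. -/
lemma iInf_eq_iInf_ratSeq (f : ℝ → ℝ) (hf : Continuous f) (hnn : ∀ t, 0 ≤ f t) :
    (⨅ t : ℝ, f t) = ⨅ n : ℕ, f (ratSeq n) := by
  have hbddR : BddBelow (Set.range f) := ⟨0, by rintro x ⟨t, rfl⟩; exact hnn t⟩
  have hbddN : BddBelow (Set.range fun n => f (ratSeq n)) :=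
    ⟨0, by rintro x ⟨n, rfl⟩; exact hnn _⟩
  refine le_antisymm (le_ciInf fun n => ciInf_le hbddR _) (le_ciInf fun t => ?_)
  refine le_of_forall_pos_le_add fun ε hε => ?_
  have hopen : IsOpen {y : ℝ | f y < f t + ε} := isOpen_lt hf continuous_const
  obtain ⟨c, hc⟩ := Rat.denseRange_cast.exists_mem_open hopen ⟨t, by simp [hε]⟩
  obtain ⟨n, hn⟩ := ratSeq_surj c
  exact le_trans (ciInf_le hbddN n) (by rw [hn]; exact hc.le)

/-- Iterative minimizing sequence over the rationals. -/
noncomputable def minSeq {Ω : Type*} (g : ℝ → ℝ → ℝ) (ρ : Ω → ℝ) : ℕ → Ω → ℝ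
  | 0 => fun _ => ratSeq 0
  | n + 1 => fun ω =>
      if g (ratSeq (n + 1)) (ρ ω) < g (minSeq g ρ n ω) (ρ ω) then ratSeq (n + 1)
      else minSeq g ρ n ω

lemma minSeq_anti {Ω : Type*} (g : ℝ → ℝ → ℝ) (ρ : Ω → ℝ) (n : ℕ) (ω : Ω) :
    g (minSeq g ρ (n + 1) ω) (ρ ω) ≤ g (minSeq g ρ n ω) (ρ ω) := by
  by_cases h : g (ratSeq (n + 1)) (ρ ω) < g (minSeq g ρ n ω) (ρ ω) <;>
    simp [minSeq, h, le_of_lt]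

lemma minSeq_anti' {Ω : Type*} (g : ℝ → ℝ → ℝ) (ρ : Ω → ℝ) {m n : ℕ} (h : m ≤ n) (ω : Ω) :
    g (minSeq g ρ n ω) (ρ ω) ≤ g (minSeq g ρ m ω) (ρ ω) := by
  induction n with
  | zero => simp_all
  | succ k ih =>
    rcases Nat.lt_or_ge m (k+1) with hm | hm
    · exact (minSeq_anti g ρ k ω).trans (ih (Nat.lt_succ_iff.mp hm))
    · have : m = k + 1 := le_antisymm h hm
      subst this; rfl

lemma minSeq_le {Ω : Type*} (g : ℝ → ℝ → ℝ) (ρ : Ω → ℝ) (n : ℕ) (ω : Ω) :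
    g (minSeq g ρ n ω) (ρ ω) ≤ g (ratSeq n) (ρ ω) := by
  cases n with
  | zero => rfl
  | succ k =>
    by_cases h : g (ratSeq (k + 1)) (ρ ω) < g (minSeq g ρ k ω) (ρ ω)
    · simp [minSeq, h]
    · simp only [minSeq, h, if_false]
      exact le_of_not_gt h

lemma minSeq_mem {Ω : Type*} (g : ℝ → ℝ → ℝ) (ρ : Ω → ℝ) (n : ℕ) (ω : Ω) :
    ∃ k, minSeq g ρ n ω = ratSeq k := by
  induction n with
  | zero => exact ⟨0, rfl⟩
  | succ m ih =>
    by_cases h : g (ratSeq (m + 1)) (ρ ω) < g (minSeq g ρ m ω) (ρ ω)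
    · exact ⟨m + 1, by simp [minSeq, h]⟩
    · obtain ⟨k, hk⟩ := ih
      exact ⟨k, by simp only [minSeq, h, if_false]; exact hk⟩

lemma minSeq_measurable {Ω : Type*} [MeasurableSpace Ω] (g : ℝ → ℝ → ℝ) {ρ : Ω → ℝ}
    (hg : ∀ v : Ω → ℝ, Measurable v → Measurable fun ω => g (v ω) (ρ ω)) (n : ℕ) :
    Measurable (minSeq g ρ n) := by
  induction n with
  | zero => exact measurable_const
  | succ m ih =>
    exact Measurable.ite
      (measurableSet_lt (hg _ measurable_const) (hg _ ih)) measurable_const ih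

/-- For a generating function `ℓ` and probability measures `P0, P1` on a Polish space `Ω`,
the infimum of the surrogate risk `Φ(T; P0, P1) = ∫ ℓ(-T) dP0 + ∫ ℓ(T) dP1` over all
measurable detectors `T : Ω → ℝ` equals `∫ ψ(r) d(P0 + P1)`, where
`r = dP0/d(P0 + P1)` and `ψ(r) = inf_t [(1 - r)ℓ(t) + r ℓ(-t)]`. -/
theorem stmt1 {Ω : Type*} [TopologicalSpace Ω] [PolishSpace Ω] [MeasurableSpace Ω]
    [BorelSpace Ω]
    (ℓ : ℝ → ℝ) (hℓ_nonneg : ∀ t, 0 ≤ ℓ t) (hℓ_mono : Monotone ℓ)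
    (hℓ_conv : ConvexOn ℝ Set.univ ℓ) (hℓ_one : ℓ 0 = 1)
    (hℓ_lim : Filter.Tendsto ℓ Filter.atBot (nhds 0)) :
    ∀ (P0 P1 : Measure Ω), IsProbabilityMeasure P0 → IsProbabilityMeasure P1 →
    (⨅ (T : Ω → ℝ) (_ : Measurable T),
        (∫⁻ ω, ENNReal.ofReal (ℓ (-T ω)) ∂P0) + ∫⁻ ω, ENNReal.ofReal (ℓ (T ω)) ∂P1)
      = ∫⁻ ω, ENNReal.ofReal
          (⨅ t : ℝ, (1 - (P0.rnDeriv (P0 + P1) ω).toReal) * ℓ t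
              + (P0.rnDeriv (P0 + P1) ω).toReal * ℓ (-t)) ∂(P0 + P1) := by
  intro P0 P1 h0 h1
  set μ : Measure Ω := P0 + P1 with hμ
  have hP0 : P0 ≪ μ := (Measure.le_add_right le_rfl).absolutelyContinuous
  have hP1 : P1 ≪ μ := (Measure.le_add_left le_rfl).absolutelyContinuous
  have hℓ_cont : Continuous ℓ := by
    rw [← continuousOn_univ]
    simpa using hℓ_conv.continuousOn isOpen_univ
  set g : ℝ → ℝ → ℝ := fun t x => (1 - x) * ℓ t + x * ℓ (-t) with hg
  set r' : Ω → ℝ≥0∞ := P0.rnDeriv μ with hr'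
  set s' : Ω → ℝ≥0∞ := P1.rnDeriv μ with hs'
  have hr'_meas : Measurable r' := Measure.measurable_rnDeriv _ _
  have hs'_meas : Measurable s' := Measure.measurable_rnDeriv _ _
  set ρ : Ω → ℝ := fun ω => (r' ω).toReal with hρdef
  have hρ_meas : Measurable ρ := hr'_meas.ennreal_toReal
  -- the a.e. good set
  have hsum : ∀ᵐ ω ∂μ, r' ω + s' ω = 1 ∧ r' ω < ⊤ := by
    have h1 : μ.rnDeriv μ =ᵐ[μ] fun _ => 1 := Measure.rnDeriv_self μ
    have h2 : μ.rnDeriv μ =ᵐ[μ] r' + s' := by rw [hμ]; exact Measure.rnDeriv_add' P0 P1 μ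
    filter_upwards [h1, h2, Measure.rnDeriv_lt_top P0 μ] with ω e1 e2 e3
    simp only [Pi.add_apply] at e2
    exact ⟨by rw [← e2, e1], e3⟩
  have hgood : ∀ᵐ ω ∂μ, 0 ≤ ρ ω ∧ ρ ω ≤ 1 ∧ r' ω = ENNReal.ofReal (ρ ω)
      ∧ s' ω = ENNReal.ofReal (1 - ρ ω) := by
    filter_upwards [hsum] with ω hω
    obtain ⟨he, hfin⟩ := hω
    have hsfin : s' ω < ⊤ := lt_of_le_of_lt (by rw [← he]; exact le_add_self) one_lt_top
    have htr : ρ ω + (s' ω).toReal = 1 := by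
      rw [hρdef, ← ENNReal.toReal_add hfin.ne hsfin.ne, he, ENNReal.toReal_one]
    refine ⟨ENNReal.toReal_nonneg, by nlinarith [ENNReal.toReal_nonneg (a := s' ω)],
      (ENNReal.ofReal_toReal hfin.ne).symm, ?_⟩
    rw [show 1 - ρ ω = (s' ω).toReal by linarith, ENNReal.ofReal_toReal hsfin.ne]
  -- nonnegativity of g on [0,1]
  have hg_nonneg : ∀ t x, 0 ≤ x → x ≤ 1 → 0 ≤ g t x := fun t x hx0 hx1 =>
    add_nonneg (mul_nonneg (by linarith) (hℓ_nonneg t)) (mul_nonneg hx0 (hℓ_nonneg (-t)))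
  have hg_meas : ∀ v : Ω → ℝ, Measurable v → Measurable fun ω => g (v ω) (ρ ω) := by
    intro v hv
    exact ((measurable_const.sub hρ_meas).mul (hℓ_cont.measurable.comp hv)).add
      (hρ_meas.mul (hℓ_cont.measurable.comp hv.neg))
  -- Key rewrite of the risk through μ
  have keyA : ∀ Tm : Ω → ℝ, Measurable Tm →
      (∫⁻ ω, ENNReal.ofReal (ℓ (-Tm ω)) ∂P0) + ∫⁻ ω, ENNReal.ofReal (ℓ (Tm ω)) ∂P1
        = ∫⁻ ω, ENNReal.ofReal (g (Tm ω) (ρ ω)) ∂μ := by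
    intro Tm hTm
    have hma : Measurable fun ω => ENNReal.ofReal (ℓ (-Tm ω)) :=
      (hℓ_cont.measurable.comp hTm.neg).ennreal_ofReal
    have hmb : Measurable fun ω => ENNReal.ofReal (ℓ (Tm ω)) :=
      (hℓ_cont.measurable.comp hTm).ennreal_ofReal
    rw [← lintegral_rnDeriv_mul hP0 hma.aemeasurable,
      ← lintegral_rnDeriv_mul hP1 hmb.aemeasurable,
      ← lintegral_add_left (f := fun x => r' x * ENNReal.ofReal (ℓ (-Tm x))) (hr'_meas.mul hma)]
    refine lintegral_congr_ae ?_
    filter_upwards [hgood] with ω hω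
    obtain ⟨hx0, hx1, her, hes⟩ := hω
    have ha := hℓ_nonneg (-Tm ω)
    have hb := hℓ_nonneg (Tm ω)
    rw [show P1.rnDeriv μ ω = s' ω from rfl, her, hes,
      ← ENNReal.ofReal_mul hx0, ← ENNReal.ofReal_mul (by linarith : (0:ℝ) ≤ 1 - ρ ω),
      ← ENNReal.ofReal_add (mul_nonneg hx0 ha) (mul_nonneg (by linarith) hb)]
    congr 1
    simp only [hg]
    ring
  -- the minimizing sequence
  set T : ℕ → Ω → ℝ := minSeq g ρ with hT
  have hT_meas : ∀ n, Measurable (T n) := minSeq_measurable g hg_meas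
  set F : ℕ → Ω → ℝ≥0∞ := fun n ω => ENNReal.ofReal (g (T n ω) (ρ ω)) with hF
  have hF_meas : ∀ n, Measurable (F n) := fun n => (hg_meas _ (hT_meas n)).ennreal_ofReal
  have hF_anti : Antitone F := antitone_nat_of_succ_le fun n ω =>
    ENNReal.ofReal_le_ofReal (minSeq_anti g ρ n ω)
  have hF0_fin : ∫⁻ ω, F 0 ω ∂μ ≠ ⊤ := by
    have hb : ∀ᵐ ω ∂μ, F 0 ω ≤ ENNReal.ofReal (ℓ (ratSeq 0) + ℓ (-(ratSeq 0))) := by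
      filter_upwards [hgood] with ω hω
      obtain ⟨hx0, hx1, -, -⟩ := hω
      refine ENNReal.ofReal_le_ofReal ?_
      have h1 : (1 - ρ ω) * ℓ (ratSeq 0) ≤ ℓ (ratSeq 0) := by
        nlinarith [hℓ_nonneg (ratSeq 0)]
      have h2 : ρ ω * ℓ (-(ratSeq 0)) ≤ ℓ (-(ratSeq 0)) := by
        nlinarith [hℓ_nonneg (-(ratSeq 0))]
      have he : g (T 0 ω) (ρ ω) = (1 - ρ ω) * ℓ (ratSeq 0) + ρ ω * ℓ (-(ratSeq 0)) := rfl
      rw [he]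
      linarith
    refine ne_of_lt (lt_of_le_of_lt (lintegral_mono_ae hb) ?_)
    rw [lintegral_const]
    exact ENNReal.mul_lt_top ENNReal.ofReal_lt_top (measure_lt_top μ _)
  -- pointwise identification of the limit
  have hlim : ∀ᵐ ω ∂μ, (⨅ n, F n ω)
      = ENNReal.ofReal (⨅ t : ℝ, g t (ρ ω)) := by
    filter_upwards [hgood] with ω hω
    obtain ⟨hx0, hx1, -, -⟩ := hω
    have hbddR : BddBelow (Set.range fun t => g t (ρ ω)) :=
      ⟨0, by rintro x ⟨t, rfl⟩; exact hg_nonneg t _ hx0 hx1⟩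
    have hbddN : BddBelow (Set.range fun n => g (T n ω) (ρ ω)) :=
      ⟨0, by rintro x ⟨n, rfl⟩; exact hg_nonneg _ _ hx0 hx1⟩
    have hbddQ : BddBelow (Set.range fun n => g (ratSeq n) (ρ ω)) :=
      ⟨0, by rintro x ⟨n, rfl⟩; exact hg_nonneg _ _ hx0 hx1⟩
    have hreal : (⨅ n, g (T n ω) (ρ ω)) = ⨅ t : ℝ, g t (ρ ω) := by
      refine le_antisymm ?_ (le_ciInf fun n => ciInf_le hbddR (T n ω))
      have h1 : (⨅ n, g (T n ω) (ρ ω)) ≤ ⨅ n, g (ratSeq n) (ρ ω) :=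
        le_ciInf fun k => (ciInf_le hbddN k).trans (minSeq_le g ρ k ω)
      have h2 : (⨅ t : ℝ, g t (ρ ω)) = ⨅ n, g (ratSeq n) (ρ ω) :=
        iInf_eq_iInf_ratSeq (fun t => g t (ρ ω))
          (((continuous_const.mul hℓ_cont).add
            (continuous_const.mul (hℓ_cont.comp continuous_neg))))
          (fun t => hg_nonneg t _ hx0 hx1)
      rw [h2]; exact h1
    rw [← hreal, ENNReal.ofReal_iInf]
  -- conclude
  have hRHS : ∫⁻ ω, ENNReal.ofReal
        (⨅ t : ℝ, (1 - (P0.rnDeriv (P0 + P1) ω).toReal) * ℓ t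
            + (P0.rnDeriv (P0 + P1) ω).toReal * ℓ (-t)) ∂(P0 + P1)
      = ∫⁻ ω, (⨅ n, F n ω) ∂μ := by
    rw [← hμ]
    refine lintegral_congr_ae ?_
    filter_upwards [hlim] with ω hω
    rw [hω]
  rw [hRHS]
  refine le_antisymm ?_ ?_
  · -- inf ≤ ∫ inf F
    rw [lintegral_iInf hF_meas hF_anti hF0_fin]
    refine le_iInf fun n => ?_
    refine le_trans (iInf₂_le (T n) (hT_meas n)) ?_
    rw [keyA (T n) (hT_meas n)]
  · -- ∫ inf F ≤ Φ(T) for every measurable T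
    refine le_iInf₂ fun Tm hTm => ?_
    rw [keyA Tm hTm]
    refine lintegral_mono_ae ?_
    filter_upwards [hgood, hlim] with ω hω hlimω
    obtain ⟨hx0, hx1, -, -⟩ := hω
    rw [hlimω]
    refine ENNReal.ofReal_le_ofReal ?_
    exact ciInf_le ⟨0, by rintro x ⟨t, rfl⟩; exact hg_nonneg t _ hx0 hx1⟩ (Tm ω)
end

section
/- Let ℓ be a generating function, let P0, P1 be probability measures on Ω, let r = dP0/d(P0 + P1) be the Radon–Nikodym derivative of P0 with respect to P0 + P1, and let ψ(r) = inf_{t ∈ ℝ} [(1 − r)ℓ(t) + r ℓ(−t)]. If a measurable detector T : Ω → ℝ satisfies (1 − r(ω))ℓ(T(ω)) + r(ω)ℓ(−T(ω)) = ψ(r(ω)) for (P0 + P1)-almost every ω, then Φ(T; P0, P1) = ∫ ψ(r) d(P0 + P1); in particular, such a pointwise minimizing detector attains the infimum of Φ(·; P0, P1) over all measurable detectors. -/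
open MeasureTheory ENNReal

/-- Let `ℓ` be a generating function, `P0, P1` probability measures on a Polish space `Ω`,
`r = dP0/d(P0 + P1)` and `ψ(r) = inf_t [(1 - r)ℓ(t) + r ℓ(-t)]`. If a measurable detector
`T` satisfies `(1 - r(ω))ℓ(T(ω)) + r(ω)ℓ(-T(ω)) = ψ(r(ω))` for `(P0 + P1)`-a.e. `ω`, then
the surrogate risk of `T` equals `∫ ψ(r) d(P0 + P1)`, and `T` attains the infimum of the
surrogate risk over all measurable detectors. -/
theorem stmt2 {Ω : Type*} [TopologicalSpace Ω] [PolishSpace Ω] [MeasurableSpace Ω]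
    [BorelSpace Ω]
    (ℓ : ℝ → ℝ) (hℓ_nonneg : ∀ t, 0 ≤ ℓ t) (hℓ_mono : Monotone ℓ)
    (hℓ_conv : ConvexOn ℝ Set.univ ℓ) (hℓ_one : ℓ 0 = 1)
    (hℓ_lim : Filter.Tendsto ℓ Filter.atBot (nhds 0))
    (P0 P1 : Measure Ω) [IsProbabilityMeasure P0] [IsProbabilityMeasure P1]
    (ψ : ℝ → ℝ) (hψ : ∀ r : ℝ, ψ r = ⨅ t : ℝ, (1 - r) * ℓ t + r * ℓ (-t))
    (T : Ω → ℝ) (hT : Measurable T)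
    (hopt : ∀ᵐ ω ∂(P0 + P1),
      (1 - (P0.rnDeriv (P0 + P1) ω).toReal) * ℓ (T ω)
        + (P0.rnDeriv (P0 + P1) ω).toReal * ℓ (-T ω)
        = ψ ((P0.rnDeriv (P0 + P1) ω).toReal)) :
    ((∫⁻ ω, ENNReal.ofReal (ℓ (-T ω)) ∂P0) + ∫⁻ ω, ENNReal.ofReal (ℓ (T ω)) ∂P1
        = ∫⁻ ω, ENNReal.ofReal (ψ ((P0.rnDeriv (P0 + P1) ω).toReal)) ∂(P0 + P1)) ∧
    ((∫⁻ ω, ENNReal.ofReal (ℓ (-T ω)) ∂P0) + ∫⁻ ω, ENNReal.ofReal (ℓ (T ω)) ∂P1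
        = ⨅ (T' : Ω → ℝ) (_ : Measurable T'),
            (∫⁻ ω, ENNReal.ofReal (ℓ (-T' ω)) ∂P0) + ∫⁻ ω, ENNReal.ofReal (ℓ (T' ω)) ∂P1) := by
  set μ := P0 + P1 with hμdef
  have hP0 : P0 ≪ μ := Measure.absolutelyContinuous_of_le (Measure.le_add_right le_rfl)
  have hP1 : P1 ≪ μ := Measure.absolutelyContinuous_of_le (Measure.le_add_left le_rfl)
  have hℓm : Measurable ℓ := hℓ_mono.measurable
  set r0 := P0.rnDeriv μ with hr0def
  set r1 := P1.rnDeriv μ with hr1def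
  have hr0m : Measurable r0 := Measure.measurable_rnDeriv _ _
  have hr1m : Measurable r1 := Measure.measurable_rnDeriv _ _
  have hsum : ∀ᵐ ω ∂μ, r0 ω + r1 ω = 1 := by
    have h1 := Measure.rnDeriv_add P0 P1 μ
    have h2 := Measure.rnDeriv_self μ
    rw [← hμdef] at h1
    filter_upwards [h1, h2] with ω h1 h2
    simp only [Pi.add_apply] at h1
    rw [← h1, h2]
  -- pointwise a.e. facts
  have hpt : ∀ᵐ ω ∂μ, r0 ω ≠ ∞ ∧ r1 ω = ENNReal.ofReal (1 - (r0 ω).toReal) ∧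
      (r0 ω).toReal ≤ 1 := by
    filter_upwards [hsum] with ω h
    have h0 : r0 ω ≤ 1 := le_of_le_of_eq (self_le_add_right _ _) h
    have h1 : r1 ω ≤ 1 := le_of_le_of_eq (self_le_add_left _ _) h
    have hf0 : r0 ω ≠ ∞ := (lt_of_le_of_lt h0 one_lt_top).ne
    have hf1 : r1 ω ≠ ∞ := (lt_of_le_of_lt h1 one_lt_top).ne
    have htr : (r0 ω).toReal + (r1 ω).toReal = 1 := by
      rw [← ENNReal.toReal_add hf0 hf1, h, ENNReal.toReal_one]
    refine ⟨hf0, ?_, ?_⟩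
    · rw [show (1 : ℝ) - (r0 ω).toReal = (r1 ω).toReal by linarith,
        ENNReal.ofReal_toReal hf1]
    · exact ENNReal.toReal_le_of_le_ofReal zero_le_one (by simpa using h0)
  -- key rewriting of the risk as an integral against μ
  have key : ∀ (T' : Ω → ℝ), Measurable T' →
      (∫⁻ ω, ENNReal.ofReal (ℓ (-T' ω)) ∂P0) + ∫⁻ ω, ENNReal.ofReal (ℓ (T' ω)) ∂P1
        = ∫⁻ ω, (r0 ω * ENNReal.ofReal (ℓ (-T' ω)) + r1 ω * ENNReal.ofReal (ℓ (T' ω))) ∂μ := by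
    intro T' hT'
    have hm0 : Measurable fun ω => ENNReal.ofReal (ℓ (-T' ω)) :=
      ENNReal.measurable_ofReal.comp (hℓm.comp hT'.neg)
    have hm1 : Measurable fun ω => ENNReal.ofReal (ℓ (T' ω)) :=
      ENNReal.measurable_ofReal.comp (hℓm.comp hT')
    rw [lintegral_add_left (show Measurable fun ω => r0 ω * ENNReal.ofReal (ℓ (-T' ω)) from hr0m.mul hm0)]
    rw [lintegral_rnDeriv_mul hP0 hm0.aemeasurable,
      lintegral_rnDeriv_mul hP1 hm1.aemeasurable]
  -- pointwise identity for arbitrary T'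
  have hpt2 : ∀ (T' : Ω → ℝ), ∀ᵐ ω ∂μ,
      r0 ω * ENNReal.ofReal (ℓ (-T' ω)) + r1 ω * ENNReal.ofReal (ℓ (T' ω))
        = ENNReal.ofReal ((1 - (r0 ω).toReal) * ℓ (T' ω) + (r0 ω).toReal * ℓ (-T' ω)) := by
    intro T'
    filter_upwards [hpt] with ω ⟨hf0, hr1, hle⟩
    set a := (r0 ω).toReal with ha
    have ha0 : 0 ≤ a := ENNReal.toReal_nonneg
    have hr0eq : r0 ω = ENNReal.ofReal a := (ENNReal.ofReal_toReal hf0).symm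
    rw [hr1, hr0eq]
    rw [← ENNReal.ofReal_mul ha0, ← ENNReal.ofReal_mul (by linarith),
      ← ENNReal.ofReal_add (mul_nonneg ha0 (hℓ_nonneg _))
        (mul_nonneg (by linarith) (hℓ_nonneg _))]
    rw [add_comm]
  have heq : (∫⁻ ω, ENNReal.ofReal (ℓ (-T ω)) ∂P0) + ∫⁻ ω, ENNReal.ofReal (ℓ (T ω)) ∂P1
      = ∫⁻ ω, ENNReal.ofReal (ψ ((r0 ω).toReal)) ∂μ := by
    rw [key T hT]
    refine lintegral_congr_ae ?_
    filter_upwards [hpt2 T, hopt] with ω h1 h2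
    rw [h1, h2]
  refine ⟨heq, ?_⟩
  refine le_antisymm (le_iInf fun T' => le_iInf fun hT' => ?_) ?_
  · rw [heq, key T' hT']
    refine lintegral_mono_ae ?_
    filter_upwards [hpt2 T', hpt] with ω h1 ⟨hf0, hr1, hle⟩
    rw [h1]
    refine ENNReal.ofReal_le_ofReal ?_
    rw [hψ]
    refine ciInf_le ⟨0, ?_⟩ (T' ω)
    rintro x ⟨t, rfl⟩
    exact add_nonneg (mul_nonneg (by linarith) (hℓ_nonneg _))
      (mul_nonneg ENNReal.toReal_nonneg (hℓ_nonneg _))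
  · exact iInf_le_of_le T (iInf_le_of_le hT le_rfl)
end

section
/- For every r ∈ [0, 1], the infimum over t ∈ ℝ of (1 − r)·(max(t + 1, 0))² + r·(max(−t + 1, 0))² equals 4r(1 − r); moreover, the infimum is attained at t = 2r − 1. -/
lemma stmt14_lb (r : ℝ) (hr : r ∈ Set.Icc (0 : ℝ) 1) (t : ℝ) :
    4 * r * (1 - r) ≤ (1 - r) * (max (t + 1) 0) ^ 2 + r * (max (-t + 1) 0) ^ 2 := by
  obtain ⟨hr0, hr1⟩ := hr
  set a := max (t + 1) 0 with ha
  set b := max (-t + 1) 0 with hb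
  have ha1 : t + 1 ≤ a := le_max_left _ _
  have hb1 : -t + 1 ≤ b := le_max_left _ _
  have ha0 : 0 ≤ a := le_max_right _ _
  have hb0 : 0 ≤ b := le_max_right _ _
  nlinarith [sq_nonneg ((1 - r) * a - r * b), sq_nonneg (a + b - 2), mul_nonneg (mul_nonneg hr0 (by linarith : (0:ℝ) ≤ 1 - r)) (by linarith : (0:ℝ) ≤ a + b - 2)]

lemma stmt14_at (r : ℝ) (hr : r ∈ Set.Icc (0 : ℝ) 1) :
    (1 - r) * (max ((2 * r - 1) + 1) 0) ^ 2 + r * (max (-(2 * r - 1) + 1) 0) ^ 2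
      = 4 * r * (1 - r) := by
  obtain ⟨hr0, hr1⟩ := hr
  rw [max_eq_left (by linarith), max_eq_left (by linarith)]
  ring

/-- For the generating function `ℓ(t) = (max(t+1,0))²`, the pointwise minimal surrogate
testing risk is `ψ(r) = inf_t [(1-r)(max(t+1,0))² + r(max(-t+1,0))²] = 4r(1-r)`, attained at
`t = 2r - 1`. -/
theorem stmt14 (r : ℝ) (hr : r ∈ Set.Icc (0 : ℝ) 1) :
    (⨅ t : ℝ, (1 - r) * (max (t + 1) 0) ^ 2 + r * (max (-t + 1) 0) ^ 2) = 4 * r * (1 - r) ∧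
    (1 - r) * (max ((2 * r - 1) + 1) 0) ^ 2 + r * (max (-(2 * r - 1) + 1) 0) ^ 2
      = 4 * r * (1 - r) := by
  refine ⟨le_antisymm ?_ (le_ciInf (stmt14_lb r hr)), stmt14_at r hr⟩
  calc (⨅ t : ℝ, (1 - r) * (max (t + 1) 0) ^ 2 + r * (max (-t + 1) 0) ^ 2)
      ≤ (1 - r) * (max ((2 * r - 1) + 1) 0) ^ 2 + r * (max (-(2 * r - 1) + 1) 0) ^ 2 :=
        ciInf_le ⟨4 * r * (1 - r), fun x ⟨t, ht⟩ => ht ▸ stmt14_lb r hr t⟩ _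
    _ = 4 * r * (1 - r) := stmt14_at r hr
end

section
/- Let P0 and P1 be probability measures on a measurable space Ω, let μ = P0 + P1, let p_k = dP_k/dμ be the Radon–Nikodym derivatives (so p0 + p1 = 1 μ-almost everywhere), and let M = ½(P0 + P1). Then, with the convention 0 log 0 = 0, ∫ −( p0(ω) log p0(ω) + p1(ω) log p1(ω) ) dμ(ω) = 2 log 2 − KL(P0 ‖ M) − KL(P1 ‖ M); equivalently, the minimal surrogate risk Φ*(P0, P1) = ∫ −( p0 log p0 + p1 log p1 )/log 2 dμ for the generating function ℓ(t) = log(1 + e^t)/log 2 satisfies 1 − Φ*(P0, P1)/2 = JS(P0, P1)/log 2, where JS(P0, P1) = ½ KL(P0 ‖ M) + ½ KL(P1 ‖ M) is the Jensen–Shannon divergence. -/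
open MeasureTheory ENNReal

/-- Real-valued Kullback–Leibler divergence `KL(P ‖ Q) = ∫ log(dP/dQ) dP` for `P ≪ Q`. -/
noncomputable def klReal {Ω : Type*} [MeasurableSpace Ω] (P Q : Measure Ω) : ℝ :=
  ∫ ω, Real.log (P.rnDeriv Q ω).toReal ∂P

lemma integrable_mul_log_rnDeriv {Ω : Type*} [MeasurableSpace Ω] (P μ : Measure Ω)
    [IsFiniteMeasure μ] (hle : P ≤ μ) :
    Integrable (fun ω => (P.rnDeriv μ ω).toReal * Real.log (P.rnDeriv μ ω).toReal) μ := by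
  refine Integrable.mono' (integrable_const (1 : ℝ)) ?_ ?_
  · exact ((Measure.measurable_rnDeriv P μ).ennreal_toReal.mul
      (Real.measurable_log.comp (Measure.measurable_rnDeriv P μ).ennreal_toReal)).aestronglyMeasurable
  · filter_upwards [Measure.rnDeriv_le_one_of_le hle] with ω hω
    set x : ℝ := (P.rnDeriv μ ω).toReal with hx
    have hx0 : 0 ≤ x := ENNReal.toReal_nonneg
    have hx1 : x ≤ 1 := by
      have := ENNReal.toReal_mono (by norm_num) hω
      simpa using this
    rcases eq_or_lt_of_le hx0 with h | h
    · simp [← h]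
    · have := Real.abs_log_mul_self_lt x h hx1
      calc |x * Real.log x| = |Real.log x * x| := by rw [mul_comm]
        _ ≤ 1 := this.le

lemma klReal_half_smul {Ω : Type*} [MeasurableSpace Ω] (P μ : Measure Ω)
    [IsProbabilityMeasure P] [IsFiniteMeasure μ] (hle : P ≤ μ) :
    klReal P ((2 : ℝ≥0∞)⁻¹ • μ) = Real.log 2
      + ∫ ω, (P.rnDeriv μ ω).toReal * Real.log (P.rnDeriv μ ω).toReal ∂μ := by
  have hac : P ≪ μ := Measure.absolutelyContinuous_of_le hle
  have h1 : P.rnDeriv ((2 : ℝ≥0∞)⁻¹ • μ) =ᵐ[μ] (2 : ℝ≥0∞)⁻¹⁻¹ • P.rnDeriv μ :=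
    Measure.rnDeriv_smul_right_of_ne_top P μ (by simp) (by simp)
  have h1' : P.rnDeriv ((2 : ℝ≥0∞)⁻¹ • μ) =ᵐ[μ] fun ω => 2 * P.rnDeriv μ ω := by
    filter_upwards [h1] with ω hω
    simpa [inv_inv] using hω
  have hpos : ∀ᵐ ω ∂P, 0 < P.rnDeriv μ ω := Measure.rnDeriv_pos hac
  have hlt : ∀ᵐ ω ∂P, P.rnDeriv μ ω < ∞ := hac.ae_le (Measure.rnDeriv_lt_top P μ)
  have heq : (fun ω => Real.log (P.rnDeriv ((2 : ℝ≥0∞)⁻¹ • μ) ω).toReal)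
      =ᵐ[P] fun ω => Real.log 2 + Real.log (P.rnDeriv μ ω).toReal := by
    filter_upwards [hac.ae_le h1', hpos, hlt] with ω hω h0 htop
    rw [hω, ENNReal.toReal_mul]
    have h0' : 0 < (P.rnDeriv μ ω).toReal := ENNReal.toReal_pos h0.ne' htop.ne
    rw [show ((2 : ℝ≥0∞)).toReal = (2 : ℝ) by simp, Real.log_mul (by norm_num) h0'.ne']
  have hint : Integrable (fun ω => Real.log (P.rnDeriv μ ω).toReal) P := by
    rw [← integrable_rnDeriv_smul_iff hac]
    simpa [smul_eq_mul] using integrable_mul_log_rnDeriv P μ hle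
  calc klReal P ((2 : ℝ≥0∞)⁻¹ • μ)
      = ∫ ω, (Real.log 2 + Real.log (P.rnDeriv μ ω).toReal) ∂P := integral_congr_ae heq
    _ = Real.log 2 + ∫ ω, Real.log (P.rnDeriv μ ω).toReal ∂P := by
        rw [integral_add (integrable_const _) hint, integral_const]
        simp
    _ = Real.log 2 + ∫ ω, (P.rnDeriv μ ω).toReal * Real.log (P.rnDeriv μ ω).toReal ∂μ := by
        rw [← integral_rnDeriv_smul hac]
        simp [smul_eq_mul]

/-- For probability measures `P0, P1` with `μ = P0 + P1`, densities `pₖ = dPₖ/dμ` and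
`M = ½(P0 + P1)`, with the convention `0 log 0 = 0` (automatic since `Real.log 0 = 0`),
`∫ -(p0 log p0 + p1 log p1) dμ = 2 log 2 - KL(P0 ‖ M) - KL(P1 ‖ M)`; equivalently, the
minimal surrogate risk `Φ*(P0,P1) = ∫ -(p0 log p0 + p1 log p1)/log 2 dμ` for the generating
function `ℓ(t) = log(1+eᵗ)/log 2` satisfies `1 - Φ*(P0,P1)/2 = JS(P0,P1)/log 2`, where
`JS(P0,P1) = ½ KL(P0 ‖ M) + ½ KL(P1 ‖ M)` is the Jensen–Shannon divergence. -/
theorem stmt18 {Ω : Type*} [MeasurableSpace Ω]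
    (P0 P1 : Measure Ω) [IsProbabilityMeasure P0] [IsProbabilityMeasure P1] :
    (∫ ω, -((P0.rnDeriv (P0 + P1) ω).toReal * Real.log (P0.rnDeriv (P0 + P1) ω).toReal
          + (P1.rnDeriv (P0 + P1) ω).toReal * Real.log (P1.rnDeriv (P0 + P1) ω).toReal)
        ∂(P0 + P1)
      = 2 * Real.log 2 - klReal P0 ((2 : ℝ≥0∞)⁻¹ • (P0 + P1))
          - klReal P1 ((2 : ℝ≥0∞)⁻¹ • (P0 + P1))) ∧
    (1 - (∫ ω, -((P0.rnDeriv (P0 + P1) ω).toReal * Real.log (P0.rnDeriv (P0 + P1) ω).toReal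
            + (P1.rnDeriv (P0 + P1) ω).toReal * Real.log (P1.rnDeriv (P0 + P1) ω).toReal)
              / Real.log 2 ∂(P0 + P1)) / 2
      = ((1 / 2) * klReal P0 ((2 : ℝ≥0∞)⁻¹ • (P0 + P1))
          + (1 / 2) * klReal P1 ((2 : ℝ≥0∞)⁻¹ • (P0 + P1))) / Real.log 2) := by
  set μ := P0 + P1 with hμ
  have hle0 : P0 ≤ μ := Measure.le_add_right le_rfl
  have hle1 : P1 ≤ μ := Measure.le_add_left le_rfl
  have hI0 := integrable_mul_log_rnDeriv P0 μ hle0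
  have hI1 := integrable_mul_log_rnDeriv P1 μ hle1
  have hk0 := klReal_half_smul P0 μ hle0
  have hk1 := klReal_half_smul P1 μ hle1
  have hmain : ∫ ω, -((P0.rnDeriv μ ω).toReal * Real.log (P0.rnDeriv μ ω).toReal
          + (P1.rnDeriv μ ω).toReal * Real.log (P1.rnDeriv μ ω).toReal) ∂μ
      = 2 * Real.log 2 - klReal P0 ((2 : ℝ≥0∞)⁻¹ • μ) - klReal P1 ((2 : ℝ≥0∞)⁻¹ • μ) := by
    rw [integral_neg, integral_add hI0 hI1, hk0, hk1]
    ring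
  refine ⟨hmain, ?_⟩
  have hlog : Real.log 2 ≠ 0 := (Real.log_pos (by norm_num)).ne'
  rw [integral_div, hmain]
  field_simp
  ring
end
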